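/- arXiv:1503.08490 — 2 statements merged into one kernel-verified Lean document; each statement's English description precedes it below -/
import Mathlib

section
/- Let W be a real random variable with Laplace density p(w) = (1/(2b)) exp(−|w|/b) for scale b > 0. If b ≥ S/ε for some S > 0 and ε > 0, then for any two real numbers d, d' with |d − d'| ≤ S, and any measurable set E ⊆ ℝ, P[d + W ∈ E] ≤ e^ε · P[d' + W ∈ E]. (Laplace mechanism gives ε-differential privacy for a query with sensitivity S.) -/
open MeasureTheory Real
open ENNReal

/-- Laplace mechanism: adding `Lap(b)` noise with `b ≥ S/ε` to a query with
sensitivity `S` gives `ε`-differential privacy. -/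
theorem laplace_mechanism_eps_dp (b S ε : ℝ) (hb : 0 < b) (hS : 0 < S) (hε : 0 < ε)
    (hbS : S / ε ≤ b) (d d' : ℝ) (hdd : |d - d'| ≤ S) (E : Set ℝ) (hE : MeasurableSet E) :
    (volume.withDensity fun w => ENNReal.ofReal (1 / (2 * b) * Real.exp (-|w| / b)))
        {w : ℝ | d + w ∈ E}
      ≤ ENNReal.ofReal (Real.exp ε) *
        (volume.withDensity fun w => ENNReal.ofReal (1 / (2 * b) * Real.exp (-|w| / b)))
          {w : ℝ | d' + w ∈ E} := by
  set f : ℝ → ℝ≥0∞ := fun w => ENNReal.ofReal (1 / (2 * b) * Real.exp (-|w| / b)) with hf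
  have hfm : Measurable f := by fun_prop
  have hA : ∀ c : ℝ, MeasurableSet {w : ℝ | c + w ∈ E} :=
    fun c => (measurable_const_add c) hE
  have key : ∀ c : ℝ, volume.withDensity f {w : ℝ | c + w ∈ E} = ∫⁻ x in E, f (x - c) := by
    intro c
    rw [withDensity_apply _ (hA c)]
    have hmp : MeasurePreserving (fun x : ℝ => x - c) volume volume :=
      measurePreserving_sub_right volume c
    have hpre : (fun x : ℝ => x - c) ⁻¹' {w : ℝ | c + w ∈ E} = E := by
      ext x; simp [Set.mem_preimage]
    calc ∫⁻ w in {w : ℝ | c + w ∈ E}, f w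
        = ∫⁻ x in (fun x : ℝ => x - c) ⁻¹' {w : ℝ | c + w ∈ E}, f (x - c) := by
          rw [hmp.setLIntegral_comp_preimage (hA c) hfm]
      _ = ∫⁻ x in E, f (x - c) := by rw [hpre]
  rw [key d, key d', ← lintegral_const_mul _ (by fun_prop : Measurable fun x => f (x - d'))]
  refine lintegral_mono fun x => ?_
  have hc : (0:ℝ) ≤ 1 / (2 * b) := by positivity
  have hSb : S ≤ ε * b := by
    have := (div_le_iff₀ hε).mp hbS
    nlinarith
  have habs : |x - d'| - S ≤ |x - d| := by
    have h1 := abs_sub_abs_le_abs_sub (x - d') (x - d)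
    have h2 : |x - d' - (x - d)| = |d - d'| := by rw [show x - d' - (x - d) = d - d' by ring]
    linarith [h2 ▸ h1]
  have hexp : Real.exp (-|x - d| / b) ≤ Real.exp ε * Real.exp (-|x - d'| / b) := by
    rw [← Real.exp_add]
    apply Real.exp_le_exp.2
    rw [div_le_iff₀ hb, add_mul, div_mul_cancel₀ _ hb.ne']
    nlinarith
  calc f (x - d) = ENNReal.ofReal (1 / (2 * b) * Real.exp (-|x - d| / b)) := rfl
    _ ≤ ENNReal.ofReal (Real.exp ε * (1 / (2 * b) * Real.exp (-|x - d'| / b))) := by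
        apply ENNReal.ofReal_le_ofReal
        nlinarith [Real.exp_pos (-|x - d'| / b), Real.exp_pos ε]
    _ = ENNReal.ofReal (Real.exp ε) * f (x - d') := by
        rw [ENNReal.ofReal_mul (Real.exp_pos ε).le]
end

section
/- The Gaussian Q-function tail bound relevant to the Gaussian mechanism: for W ∼ N(0, σ²) with σ ≥ (S/(2ε))(K + √(K² + 2ε)) where K = Q⁻¹(δ), ε > 0, δ ∈ (0, 1/2), S > 0, and for any shift s with |s| ≤ S and any measurable E ⊆ ℝ, P[s + W ∈ E] ≤ e^ε P[W ∈ E] + δ. -/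
open MeasureTheory Real

private lemma gm_exp_integrableOn (T : Set ℝ) :
    IntegrableOn (fun u : ℝ => Real.exp (-u ^ 2 / 2)) T := by
  have h1 : Integrable (fun x : ℝ => Real.exp (-(1/2) * x ^ 2)) := by
    exact integrable_exp_neg_mul_sq (by norm_num)
  have h2 : (fun u : ℝ => Real.exp (-u ^ 2 / 2)) = fun x : ℝ => Real.exp (-(1/2) * x ^ 2) := by
    funext x; congr 1; ring
  rw [h2]; exact h1.integrableOn

private lemma gm_tail_mono {a K : ℝ} (h : K ≤ a) :
    (∫ u in Set.Ioi a, Real.exp (-u ^ 2 / 2)) ≤ ∫ u in Set.Ioi K, Real.exp (-u ^ 2 / 2) := by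
  refine setIntegral_mono_set (gm_exp_integrableOn _)
    (Filter.Eventually.of_forall fun x => (Real.exp_pos _).le)
    (Filter.Eventually.of_forall ?_)
  exact Set.Ioi_subset_Ioi h

set_option maxHeartbeats 1000000 in
private lemma gm_aux (σ S ε δ K : ℝ) (hσ : 0 < σ) (hε : 0 < ε)
    (hK : (∫ u in Set.Ioi K, Real.exp (-u ^ 2 / 2)) / Real.sqrt (2 * π) = δ)
    (hσbound : S / (2 * ε) * (K + Real.sqrt (K ^ 2 + 2 * ε)) ≤ σ)
    (s : ℝ) (hs0 : 0 ≤ s) (hsS : s ≤ S) (E : Set ℝ) (hE : MeasurableSet E) :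
    (∫⁻ x in E, ENNReal.ofReal
        (1 / (σ * Real.sqrt (2 * π)) * Real.exp (-(x - s) ^ 2 / (2 * σ ^ 2))))
      ≤ ENNReal.ofReal (Real.exp ε) *
          (∫⁻ x in E, ENNReal.ofReal
            (1 / (σ * Real.sqrt (2 * π)) * Real.exp (-x ^ 2 / (2 * σ ^ 2))))
        + ENNReal.ofReal δ := by
  have hsqπ : (0:ℝ) < Real.sqrt (2 * π) := Real.sqrt_pos.2 (by positivity)
  set c : ℝ := 1 / (σ * Real.sqrt (2 * π)) with hc
  have hcpos : 0 < c := by rw [hc]; positivity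
  have hF : Measurable fun x : ℝ => ENNReal.ofReal (c * Real.exp (-x ^ 2 / (2 * σ ^ 2))) := by
    fun_prop
  have hG : Measurable fun x : ℝ =>
      ENNReal.ofReal (c * Real.exp (-(x - s) ^ 2 / (2 * σ ^ 2))) := by fun_prop
  set A : Set ℝ := {x | x * s ≤ ε * σ ^ 2 + s ^ 2 / 2} with hA
  have hAm : MeasurableSet A := measurableSet_le (measurable_id.mul_const s) measurable_const
  rw [← lintegral_inter_add_diff
    (fun x => ENNReal.ofReal (c * Real.exp (-(x - s) ^ 2 / (2 * σ ^ 2)))) E hAm]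
  have part1 : (∫⁻ x in E ∩ A, ENNReal.ofReal (c * Real.exp (-(x - s) ^ 2 / (2 * σ ^ 2))))
      ≤ ENNReal.ofReal (Real.exp ε) *
        ∫⁻ x in E, ENNReal.ofReal (c * Real.exp (-x ^ 2 / (2 * σ ^ 2))) := by
    calc (∫⁻ x in E ∩ A, ENNReal.ofReal (c * Real.exp (-(x - s) ^ 2 / (2 * σ ^ 2))))
        ≤ ∫⁻ x in E ∩ A, ENNReal.ofReal (Real.exp ε) *
            ENNReal.ofReal (c * Real.exp (-x ^ 2 / (2 * σ ^ 2))) := by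
          refine setLIntegral_mono (hF.const_mul _) fun x hx => ?_
          rw [← ENNReal.ofReal_mul (Real.exp_pos ε).le]
          refine ENNReal.ofReal_le_ofReal ?_
          have hx2 : x * s ≤ ε * σ ^ 2 + s ^ 2 / 2 := hx.2
          have h2 : (0:ℝ) < 2 * σ ^ 2 := by positivity
          have key2 : x ^ 2 - (x - s) ^ 2 ≤ ε * (2 * σ ^ 2) := by nlinarith
          have key : -(x - s) ^ 2 / (2 * σ ^ 2) ≤ ε + -x ^ 2 / (2 * σ ^ 2) := by
            have e1 : -(x - s) ^ 2 / (2 * σ ^ 2)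
                = -x ^ 2 / (2 * σ ^ 2) + (x ^ 2 - (x - s) ^ 2) / (2 * σ ^ 2) := by ring
            have e2 : (x ^ 2 - (x - s) ^ 2) / (2 * σ ^ 2) ≤ ε := (div_le_iff₀ h2).2 key2
            linarith
          calc c * Real.exp (-(x - s) ^ 2 / (2 * σ ^ 2))
              ≤ c * Real.exp (ε + -x ^ 2 / (2 * σ ^ 2)) :=
                mul_le_mul_of_nonneg_left (Real.exp_le_exp.2 key) hcpos.le
            _ = Real.exp ε * (c * Real.exp (-x ^ 2 / (2 * σ ^ 2))) := by
                rw [Real.exp_add]; ring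
      _ = ENNReal.ofReal (Real.exp ε) *
            ∫⁻ x in E ∩ A, ENNReal.ofReal (c * Real.exp (-x ^ 2 / (2 * σ ^ 2))) :=
          lintegral_const_mul _ hF
      _ ≤ ENNReal.ofReal (Real.exp ε) *
            ∫⁻ x in E, ENNReal.ofReal (c * Real.exp (-x ^ 2 / (2 * σ ^ 2))) :=
          mul_le_mul_right (lintegral_mono_set Set.inter_subset_left) _
  have part2 : (∫⁻ x in E \ A, ENNReal.ofReal (c * Real.exp (-(x - s) ^ 2 / (2 * σ ^ 2))))
      ≤ ENNReal.ofReal δ := by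
    rcases eq_or_lt_of_le hs0 with hs0' | hspos
    · have hAuniv : E \ A = ∅ := by
        have : A = Set.univ := by
          ext x; simp only [hA, Set.mem_setOf_eq, Set.mem_univ, iff_true, ← hs0']
          norm_num
          positivity
        simp [this]
      rw [hAuniv]
      simp
    · set R : ℝ := Real.sqrt (K ^ 2 + 2 * ε) with hR
      have hR2 : R ^ 2 = K ^ 2 + 2 * ε := Real.sq_sqrt (by positivity)
      have hR0 : 0 ≤ R := Real.sqrt_nonneg _
      have hKR : 0 ≤ K + R := by nlinarith
      set T : ℝ := (ε * σ ^ 2 + s ^ 2 / 2) / s with hT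
      set a : ℝ := (T - s) / σ with ha
      have hσ2 : s * (K + R) ≤ 2 * ε * σ := by
        have h2ε : (0:ℝ) < 2 * ε := by positivity
        rw [div_mul_eq_mul_div, div_le_iff₀ h2ε] at hσbound
        nlinarith [mul_le_mul_of_nonneg_right hsS hKR]
      have hquad : 0 ≤ 2 * ε * σ ^ 2 - 2 * K * s * σ - s ^ 2 := by
        have h1 : 0 ≤ 2 * ε * σ - s * (K + R) := by linarith
        have h2 : 0 ≤ 2 * ε * σ - s * (K - R) := by nlinarith [mul_nonneg hs0 hR0]
        nlinarith [mul_nonneg h1 h2]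
      have hKa : K ≤ a := by
        rw [ha, le_div_iff₀ hσ, le_sub_iff_add_le, hT, le_div_iff₀ hspos]
        nlinarith [hquad]
      have hsub : E \ A ⊆ Set.Ioi T := by
        intro x hx
        have h1 : ε * σ ^ 2 + s ^ 2 / 2 < x * s := lt_of_not_ge hx.2
        show T < x
        rw [hT, div_lt_iff₀ hspos]
        linarith
      have hmap : Measure.map (fun u : ℝ => σ * u + s) volume
          = ENNReal.ofReal σ⁻¹ • volume := by
        have h1 : (fun u : ℝ => σ * u + s) = (fun x : ℝ => x + s) ∘ fun u : ℝ => σ * u := rfl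
        rw [h1, ← Measure.map_map (measurable_add_const s) (measurable_const_mul σ),
          Real.map_volume_mul_left hσ.ne', Measure.map_smul,
          map_add_right_eq_self volume s, abs_of_pos (inv_pos.2 hσ)]
      have hvol : (volume : Measure ℝ)
          = ENNReal.ofReal σ • Measure.map (fun u : ℝ => σ * u + s) volume := by
        rw [hmap, smul_smul, ← ENNReal.ofReal_mul hσ.le, mul_inv_cancel₀ hσ.ne',
          ENNReal.ofReal_one, one_smul]
      have hpre : (fun u : ℝ => σ * u + s) ⁻¹' Set.Ioi T = Set.Ioi a := by
        ext u
        simp only [Set.mem_preimage, Set.mem_Ioi, ha]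
        rw [div_lt_iff₀ hσ]
        constructor <;> intro h <;> nlinarith
      calc (∫⁻ x in E \ A, ENNReal.ofReal (c * Real.exp (-(x - s) ^ 2 / (2 * σ ^ 2))))
          ≤ ∫⁻ x in Set.Ioi T, ENNReal.ofReal (c * Real.exp (-(x - s) ^ 2 / (2 * σ ^ 2))) :=
            lintegral_mono_set hsub
        _ = ENNReal.ofReal σ * ∫⁻ x in Set.Ioi T,
              ENNReal.ofReal (c * Real.exp (-(x - s) ^ 2 / (2 * σ ^ 2)))
              ∂(Measure.map (fun u : ℝ => σ * u + s) volume) := by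
            conv_lhs => rw [hvol]
            rw [Measure.restrict_smul, lintegral_smul_measure, smul_eq_mul]
        _ = ENNReal.ofReal σ * ∫⁻ u in Set.Ioi a,
              ENNReal.ofReal (c * Real.exp (-(σ * u + s - s) ^ 2 / (2 * σ ^ 2))) := by
            rw [setLIntegral_map measurableSet_Ioi hG (by fun_prop), hpre]
        _ = ENNReal.ofReal σ * ∫⁻ u in Set.Ioi a,
              ENNReal.ofReal (c * Real.exp (-u ^ 2 / 2)) := by
            congr 1
            refine lintegral_congr fun u => ?_
            have h3 : -(σ * u + s - s) ^ 2 / (2 * σ ^ 2) = -u ^ 2 / 2 := by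
              field_simp; ring
            rw [h3]
        _ = ENNReal.ofReal σ *
              ENNReal.ofReal (∫ u in Set.Ioi a, c * Real.exp (-u ^ 2 / 2)) := by
            rw [← ofReal_integral_eq_lintegral_ofReal
              ((gm_exp_integrableOn (Set.Ioi a)).const_mul c)
              (Filter.Eventually.of_forall fun u => by positivity)]
        _ ≤ ENNReal.ofReal σ * ENNReal.ofReal (c * (δ * Real.sqrt (2 * π))) := by
            refine mul_le_mul_right (ENNReal.ofReal_le_ofReal ?_) _
            rw [integral_const_mul]
            refine mul_le_mul_of_nonneg_left ?_ hcpos.le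
            have hKint : (∫ u in Set.Ioi K, Real.exp (-u ^ 2 / 2))
                = δ * Real.sqrt (2 * π) := by
              rw [div_eq_iff hsqπ.ne'] at hK
              exact hK
            rw [← hKint]
            exact gm_tail_mono hKa
        _ = ENNReal.ofReal δ := by
            rw [← ENNReal.ofReal_mul hσ.le]
            congr 1
            rw [hc]
            field_simp
  exact add_le_add part1 part2

/-- Gaussian mechanism: if `σ ≥ (S/(2ε))(K + √(K² + 2ε))` with `K = Q⁻¹(δ)`,
then adding `N(0, σ²)` noise gives `(ε, δ)`-differential privacy for
sensitivity-`S` queries. -/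
theorem gaussian_mechanism_eps_delta_dp (σ S ε δ K : ℝ) (hσ : 0 < σ) (hS : 0 < S)
    (hε : 0 < ε) (hδ0 : 0 < δ) (hδhalf : δ < 1 / 2)
    (hK : (∫ u in Set.Ioi K, Real.exp (-u ^ 2 / 2)) / Real.sqrt (2 * π) = δ)
    (hσbound : S / (2 * ε) * (K + Real.sqrt (K ^ 2 + 2 * ε)) ≤ σ)
    (s : ℝ) (hs : |s| ≤ S) (E : Set ℝ) (hE : MeasurableSet E) :
    (volume.withDensity fun w =>
        ENNReal.ofReal (1 / (σ * Real.sqrt (2 * π)) * Real.exp (-w ^ 2 / (2 * σ ^ 2))))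
        {w : ℝ | s + w ∈ E}
      ≤ ENNReal.ofReal (Real.exp ε) *
          (volume.withDensity fun w =>
            ENNReal.ofReal
              (1 / (σ * Real.sqrt (2 * π)) * Real.exp (-w ^ 2 / (2 * σ ^ 2)))) E
        + ENNReal.ofReal δ := by
  set F : ℝ → ENNReal := fun w =>
    ENNReal.ofReal (1 / (σ * Real.sqrt (2 * π)) * Real.exp (-w ^ 2 / (2 * σ ^ 2))) with hFdef
  have hFm : Measurable F := by rw [hFdef]; fun_prop
  have hpre : MeasurableSet {w : ℝ | s + w ∈ E} := hE.preimage (by fun_prop)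
  rw [withDensity_apply _ hpre, withDensity_apply _ hE]
  have key : (∫⁻ w in {w : ℝ | s + w ∈ E}, F w) = ∫⁻ x in E, F (x - s) := by
    have h := setLIntegral_map (μ := (volume : Measure ℝ)) hE
      (f := fun x => F (x - s)) (g := fun w => s + w) (by fun_prop) (by fun_prop)
    rw [map_add_left_eq_self volume s] at h
    simp only [add_sub_cancel_left] at h
    exact h.symm
  rw [key]
  rcases le_or_gt 0 s with h0 | h0
  · have := gm_aux σ S ε δ K hσ hε hK hσbound s h0 (le_trans (le_abs_self s) hs) E hE
    simpa [hFdef] using this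
  · have hneg1 : (∫⁻ x in E, F (x - s)) = ∫⁻ y in Neg.neg ⁻¹' E, F (y - -s) := by
      have h := setLIntegral_map (μ := (volume : Measure ℝ)) hE
        (f := fun x => F (x - s)) (g := Neg.neg) (by fun_prop) measurable_neg
      rw [Measure.map_neg_eq_self volume] at h
      rw [h]
      refine lintegral_congr fun y => ?_
      rw [hFdef]
      have h4 : -(-y - s) ^ 2 / (2 * σ ^ 2) = -(y - -s) ^ 2 / (2 * σ ^ 2) := by ring
      simp only [h4]
    have hneg2 : (∫⁻ x in E, F x) = ∫⁻ y in Neg.neg ⁻¹' E, F y := by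
      have h := setLIntegral_map (μ := (volume : Measure ℝ)) hE
        (f := F) (g := Neg.neg) hFm measurable_neg
      rw [Measure.map_neg_eq_self volume] at h
      rw [h]
      refine lintegral_congr fun y => ?_
      rw [hFdef]
      have h4 : -(-y) ^ 2 / (2 * σ ^ 2) = -y ^ 2 / (2 * σ ^ 2) := by ring
      simp only [h4]
    rw [hneg1, hneg2]
    have hsS : -s ≤ S := by
      have := neg_abs_le s
      cases abs_le.mp hs with
      | intro h1 h2 => linarith
    have := gm_aux σ S ε δ K hσ hε hK hσbound (-s) (by linarith) hsS
      (Neg.neg ⁻¹' E) (hE.preimage measurable_neg)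
    simpa [hFdef] using this
end
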